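/- For positive reals a₁ ≥ ... ≥ a_m > 0, there exists μ ∈ [1/a₁², 1/a_m²] such that ((Σ a_i)/m)·exp(−μ·Var(a)/2) = (Π a_i)^{1/m}, where Var(a) is the empirical variance. -/

import Mathlib

/-- Empirical variance of a vector. -/
noncomputable def empVar {k : ℕ} (z : Fin k → ℝ) : ℝ :=
  (∑ i, (z i - (∑ j, z j) / k) ^ 2) / k

open Real Set

/-!
For `c > 0` the function `φ t = log t + t ^ 2 / (2 c ^ 2)` has `φ'' t = 1 / c ^ 2 - 1 / t ^ 2`, so it
is concave on `(0, c]` and convex on `[c, ∞)`. Its tangent line at the arithmetic mean `A` therefore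
traps every `log aᵢ` between `log A + (aᵢ - A) / A - (aᵢ - A) ^ 2 / (2 c ^ 2)` for `c = a₁` and for
`c = a_m`. Averaging kills the linear term, so `log A - log G` lies between `Var / (2 a₁ ^ 2)` and
`Var / (2 a_m ^ 2)`, and the intermediate value theorem produces `μ`.
-/

theorem ConvexOn.add_deriv_mul_sub_le {S : Set ℝ} {f : ℝ → ℝ} {x y f' : ℝ}
    (hf : ConvexOn ℝ S f) (hx : x ∈ S) (hy : y ∈ S) (hf' : HasDerivAt f f' y) :
    f y + f' * (x - y) ≤ f x := by
  rcases lt_trichotomy x y with hxy | rfl | hyx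
  · have h := hf.slope_le_of_hasDerivAt hx hy hxy hf'
    rw [slope_def_field, div_le_iff₀ (sub_pos.2 hxy)] at h
    linarith
  · simp
  · have h := hf.le_slope_of_hasDerivAt hy hx hyx hf'
    rw [slope_def_field, le_div_iff₀ (sub_pos.2 hyx)] at h
    linarith

theorem ConcaveOn.le_add_deriv_mul_sub {S : Set ℝ} {f : ℝ → ℝ} {x y f' : ℝ}
    (hf : ConcaveOn ℝ S f) (hx : x ∈ S) (hy : y ∈ S) (hf' : HasDerivAt f f' y) :
    f x ≤ f y + f' * (x - y) := by
  have h := hf.neg.add_deriv_mul_sub_le hx hy hf'.neg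
  simp only [Pi.neg_apply] at h
  linarith

lemma hasDerivAt_log_add_sq_div (c : ℝ) {s : ℝ} (hs : s ≠ 0) :
    HasDerivAt (fun t ↦ log t + t ^ 2 / (2 * c ^ 2)) (s⁻¹ + s / c ^ 2) s := by
  refine ((hasDerivAt_log hs).fun_add ((hasDerivAt_pow 2 s).div_const _)).congr_deriv ?_
  field_simp
  ring

lemma hasDerivAt_inv_add_div_sq (c : ℝ) {s : ℝ} (hs : s ≠ 0) :
    HasDerivAt (fun t ↦ t⁻¹ + t / c ^ 2) (-(s ^ 2)⁻¹ + 1 / c ^ 2) s :=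
  (hasDerivAt_inv hs).add ((hasDerivAt_id s).div_const (c ^ 2))

lemma concaveOn_log_add_sq_div (c : ℝ) :
    ConcaveOn ℝ (Ioc 0 c) (fun t ↦ log t + t ^ 2 / (2 * c ^ 2)) := by
  have hcont : ContinuousOn (fun t ↦ log t + t ^ 2 / (2 * c ^ 2)) (Ioc 0 c) :=
    (continuousOn_log.mono fun s hs ↦ hs.1.ne').add (by fun_prop)
  refine concaveOn_of_hasDerivWithinAt2_nonpos (convex_Ioc 0 c) hcont
    (f' := fun t ↦ t⁻¹ + t / c ^ 2) (f'' := fun t ↦ -(t ^ 2)⁻¹ + 1 / c ^ 2) ?_ ?_ ?_ <;>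
    rw [interior_Ioc]
  · exact fun s hs ↦ (hasDerivAt_log_add_sq_div c hs.1.ne').hasDerivWithinAt
  · exact fun s hs ↦ (hasDerivAt_inv_add_div_sq c hs.1.ne').hasDerivWithinAt
  · intro s ⟨hs, hsc⟩
    have : 1 / c ^ 2 ≤ 1 / s ^ 2 :=
      one_div_le_one_div_of_le (by positivity) (pow_le_pow_left₀ hs.le hsc.le 2)
    rw [inv_eq_one_div]
    linarith

lemma convexOn_log_add_sq_div {c : ℝ} (hc : 0 < c) :
    ConvexOn ℝ (Ici c) (fun t ↦ log t + t ^ 2 / (2 * c ^ 2)) := by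
  have hcont : ContinuousOn (fun t ↦ log t + t ^ 2 / (2 * c ^ 2)) (Ici c) :=
    (continuousOn_log.mono fun s hs ↦ (hc.trans_le hs).ne').add (by fun_prop)
  refine convexOn_of_hasDerivWithinAt2_nonneg (convex_Ici c) hcont
    (f' := fun t ↦ t⁻¹ + t / c ^ 2) (f'' := fun t ↦ -(t ^ 2)⁻¹ + 1 / c ^ 2) ?_ ?_ ?_ <;>
    rw [interior_Ici]
  · exact fun s hs ↦ (hasDerivAt_log_add_sq_div c (hc.trans hs).ne').hasDerivWithinAt
  · exact fun s hs ↦ (hasDerivAt_inv_add_div_sq c (hc.trans hs).ne').hasDerivWithinAt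
  · intro s hs
    have : 1 / s ^ 2 ≤ 1 / c ^ 2 :=
      one_div_le_one_div_of_le (by positivity) (pow_le_pow_left₀ hc.le (le_of_lt hs) 2)
    rw [inv_eq_one_div]
    linarith

lemma log_add_sq_div_tangent_eq (x c : ℝ) {y : ℝ} (hy : y ≠ 0) :
    log y + y ^ 2 / (2 * c ^ 2) + (y⁻¹ + y / c ^ 2) * (x - y) - x ^ 2 / (2 * c ^ 2) =
      log y + (x - y) / y - (x - y) ^ 2 / (2 * c ^ 2) := by
  field_simp
  ring

lemma log_le_log_add_sub_div_sub_sq {x y c : ℝ} (hx : x ∈ Ioc 0 c) (hy : y ∈ Ioc 0 c) :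
    log x ≤ log y + (x - y) / y - (x - y) ^ 2 / (2 * c ^ 2) := by
  have h := (concaveOn_log_add_sq_div c).le_add_deriv_mul_sub hx hy
    (hasDerivAt_log_add_sq_div c hy.1.ne')
  linarith [log_add_sq_div_tangent_eq x c hy.1.ne']

lemma log_add_sub_div_sub_sq_le_log {x y c : ℝ} (hc : 0 < c) (hx : c ≤ x) (hy : c ≤ y) :
    log y + (x - y) / y - (x - y) ^ 2 / (2 * c ^ 2) ≤ log x := by
  have h := (convexOn_log_add_sq_div hc).add_deriv_mul_sub_le hx hy
    (hasDerivAt_log_add_sq_div c (hc.trans_le hy).ne')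
  linarith [log_add_sq_div_tangent_eq x c (hc.trans_le hy).ne']

noncomputable def mean {k : ℕ} (z : Fin k → ℝ) : ℝ :=
  (∑ j, z j) / k

lemma empVar_eq_sum_sq_sub_mean {k : ℕ} (z : Fin k → ℝ) :
    empVar z = (∑ i, (z i - mean z) ^ 2) / k :=
  rfl

section Mean

variable {k : ℕ} (hk : k ≠ 0) {z : Fin k → ℝ} {c : ℝ}
include hk

lemma sum_sub_mean : ∑ i, (z i - mean z) = 0 := by
  rw [Finset.sum_sub_distrib, Finset.sum_const, Finset.card_univ, Fintype.card_fin, nsmul_eq_mul,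
    mean, mul_div_cancel₀ _ (Nat.cast_ne_zero.2 hk), sub_self]

lemma mean_le (h : ∀ i, z i ≤ c) : mean z ≤ c := by
  rw [mean, div_le_iff₀ (by positivity)]
  simpa [mul_comm] using Finset.sum_le_card_nsmul Finset.univ z c fun i _ ↦ h i

lemma le_mean (h : ∀ i, c ≤ z i) : c ≤ mean z := by
  rw [mean, le_div_iff₀ (by positivity)]
  simpa [mul_comm] using Finset.card_nsmul_le_sum Finset.univ z c fun i _ ↦ h i

lemma mean_pos (hpos : ∀ i, 0 < z i) : 0 < mean z :=
  div_pos (Finset.sum_pos (fun i _ ↦ hpos i) (Finset.univ_nonempty_iff.2 ⟨⟨0, by omega⟩⟩))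
    (by positivity)

lemma sum_log_mean_add_sub_div_sub_sq (c : ℝ) :
    ∑ i, (log (mean z) + (z i - mean z) / mean z - (z i - mean z) ^ 2 / (2 * c ^ 2)) =
      k * (log (mean z) - empVar z / (2 * c ^ 2)) := by
  rw [Finset.sum_sub_distrib, Finset.sum_add_distrib, ← Finset.sum_div, ← Finset.sum_div,
    sum_sub_mean hk, Finset.sum_const, Finset.card_univ, Fintype.card_fin, nsmul_eq_mul,
    empVar_eq_sum_sq_sub_mean, zero_div]
  field_simp
  ring

lemma sum_log_le (hpos : ∀ i, 0 < z i) (h : ∀ i, z i ≤ c) :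
    ∑ i, log (z i) ≤ k * (log (mean z) - empVar z / (2 * c ^ 2)) := by
  have hmean : mean z ∈ Ioc 0 c := ⟨mean_pos hk hpos, mean_le hk h⟩
  rw [← sum_log_mean_add_sub_div_sub_sq hk]
  exact Finset.sum_le_sum fun i _ ↦ log_le_log_add_sub_div_sub_sq ⟨hpos i, h i⟩ hmean

lemma le_sum_log (hc : 0 < c) (h : ∀ i, c ≤ z i) :
    k * (log (mean z) - empVar z / (2 * c ^ 2)) ≤ ∑ i, log (z i) := by
  rw [← sum_log_mean_add_sub_div_sub_sq hk]
  exact Finset.sum_le_sum fun i _ ↦ log_add_sub_div_sub_sq_le_log hc (h i) (le_mean hk h)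

end Mean

lemma log_prod_rpow_one_div {k : ℕ} {z : Fin k → ℝ} (hpos : ∀ i, 0 < z i) :
    log ((∏ i, z i) ^ ((1 : ℝ) / k)) = (∑ i, log (z i)) / k := by
  rw [log_rpow (Finset.prod_pos fun i _ ↦ hpos i), log_prod fun i _ ↦ (hpos i).ne']
  ring

lemma log_mean_sub_log_geomMean_mem_Icc {k : ℕ} (hk : k ≠ 0) {z : Fin k → ℝ} {lo hi : ℝ}
    (hlo : 0 < lo) (hge : ∀ i, lo ≤ z i) (hle : ∀ i, z i ≤ hi) :
    log (mean z) - log ((∏ i, z i) ^ ((1 : ℝ) / k)) ∈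
      Icc (1 / hi ^ 2 * empVar z / 2) (1 / lo ^ 2 * empVar z / 2) := by
  have hpos i : 0 < z i := hlo.trans_le (hge i)
  have hk' : (0 : ℝ) < k := by positivity
  have hupper := sum_log_le hk hpos hle
  have hlower := le_sum_log hk hlo hge
  have hform (c : ℝ) : 1 / c ^ 2 * empVar z / 2 = empVar z / (2 * c ^ 2) := by ring
  rw [log_prod_rpow_one_div hpos, hform, hform]
  constructor
  · rw [le_sub_comm, div_le_iff₀ hk']
    linarith
  · rw [sub_le_comm, le_div_iff₀ hk']
    linarith

/-- Hölder's defect formula in exact form: for positive reals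
a₁ ≥ ... ≥ a_m > 0 there exists μ ∈ [1/a₁², 1/a_m²] with
((Σ aᵢ)/m)·exp(−μ·Var(a)/2) = (Π aᵢ)^{1/m}. -/
theorem stmt13 {m : ℕ} (hm : 0 < m) (a : Fin m → ℝ) (hpos : ∀ i, 0 < a i)
    (hsorted : Antitone a) :
    ∃ μ ∈ Set.Icc (1 / a ⟨0, hm⟩ ^ 2) (1 / a ⟨m - 1, by omega⟩ ^ 2),
      ((∑ i, a i) / m) * Real.exp (-μ * empVar a / 2) = (∏ i, a i) ^ ((1 : ℝ) / m) := by
  have hk : m ≠ 0 := hm.ne'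
  have hle (i : Fin m) : a i ≤ a ⟨0, hm⟩ := hsorted (Fin.le_def.2 (Nat.zero_le _))
  have hge (i : Fin m) : a ⟨m - 1, by omega⟩ ≤ a i :=
    hsorted (Fin.le_def.2 (Nat.le_sub_one_of_lt i.isLt))
  have hbounds : 1 / a ⟨0, hm⟩ ^ 2 ≤ 1 / a ⟨m - 1, by omega⟩ ^ 2 :=
    one_div_le_one_div_of_le (pow_pos (hpos _) 2) (pow_le_pow_left₀ (hpos _).le (hge _) 2)
  obtain ⟨μ, hμ, hgap : μ * empVar a / 2 = _⟩ :=
    intermediate_value_Icc hbounds (f := fun μ ↦ μ * empVar a / 2) (by fun_prop)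
      (log_mean_sub_log_geomMean_mem_Icc hk (hpos _) hge hle)
  refine ⟨μ, hμ, ?_⟩
  have hG : 0 < (∏ i, a i) ^ ((1 : ℝ) / m) :=
    rpow_pos_of_pos (Finset.prod_pos fun i _ ↦ hpos i) _
  change mean a * exp (-μ * empVar a / 2) = _
  rw [neg_mul, neg_div, hgap, neg_sub, exp_sub, exp_log (mean_pos hk hpos), exp_log hG]
  exact mul_div_cancel₀ _ (mean_pos hk hpos).ne'
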